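/- arXiv:2111.00518 — 2 statements merged into one kernel-verified Lean document; each statement's English description precedes it below -/
import Mathlib

section
/- On a compact almost Hermitian 4-manifold with Gauduchon metric ω, if the space of ∂̄-harmonic (1,1)-forms equals {aω + γ : a ∈ ℂ, *γ = -γ, i d^c γ = a dω}, then its dimension is either b_- or b_- + 1, where b_- is the dimension of the space of d-harmonic anti-self-dual (1,1)-forms. -/
open Module

/-- On a compact almost Hermitian 4-manifold with Gauduchon metric ω, if the space of
∂̄-harmonic (1,1)-forms is H = {aω + γ : a ∈ ℂ, *γ = -γ, i d^c γ = a dω}, then its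
dimension is b_- or b_- + 1, where b_- is the dimension of the space H⁻ of d-harmonic
anti-self-dual (1,1)-forms (those with *γ = -γ and dγ = 0, equivalently i d^c γ = 0). -/
theorem stmt2 (V W : Type*) [AddCommGroup V] [Module ℂ V] [AddCommGroup W] [Module ℂ W]
    (starOp : V →ₗ[ℂ] V)    -- Hodge star on (1,1)-forms
    (L : V →ₗ[ℂ] W)         -- the operator i d^c
    (ω : V) (dω : W)        -- the Gauduchon metric and its differential
    (H : Submodule ℂ V)
    (hH : ∀ s : V, s ∈ H ↔ ∃ (a : ℂ) (γ : V),
        s = a • ω + γ ∧ starOp γ = -γ ∧ L γ = a • dω)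
    (Hminus : Submodule ℂ V)
    (hHminus : ∀ γ : V, γ ∈ Hminus ↔ starOp γ = -γ ∧ L γ = 0)
    (hfinH : FiniteDimensional ℂ H) (hfinHm : FiniteDimensional ℂ Hminus) :
    finrank ℂ H = finrank ℂ Hminus ∨ finrank ℂ H = finrank ℂ Hminus + 1 := by
  -- Hminus ≤ H
  have hle : Hminus ≤ H := by
    intro γ hγ
    rw [hHminus] at hγ
    rw [hH]
    exact ⟨0, γ, by simp, hγ.1, by simp [hγ.2]⟩
  have hlow : finrank ℂ Hminus ≤ finrank ℂ H := Submodule.finrank_mono hle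
  by_cases hcase : ∀ s ∈ H, s ∈ Hminus
  · left
    have : H = Hminus := le_antisymm hcase hle
    rw [this]
  · push_neg at hcase
    obtain ⟨s0, hs0H, hs0nm⟩ := hcase
    obtain ⟨a0, γ0, hdec0, hsd0, hL0⟩ := (hH s0).1 hs0H
    have ha0 : a0 ≠ 0 := by
      intro h
      apply hs0nm
      rw [hHminus]
      subst h
      simp only [zero_smul, zero_add] at hdec0 hL0
      rw [hdec0]
      exact ⟨hsd0, hL0⟩
    -- H ≤ Hminus ⊔ span s0
    have huple : H ≤ Hminus ⊔ (ℂ ∙ s0) := by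
      intro s hs
      obtain ⟨a, γ, hdec, hsd, hL⟩ := (hH s).1 hs
      have hmem : a0 • s - a • s0 ∈ Hminus := by
        rw [hHminus]
        have h1 : a0 • s - a • s0 = a0 • γ - a • γ0 := by
          rw [hdec, hdec0]
          rw [smul_add, smul_add, smul_smul, smul_smul, mul_comm]
          abel
        constructor
        · rw [h1]; simp only [map_sub, map_smul, hsd, hsd0, smul_neg]; abel
        · rw [h1]; simp [hL, hL0, smul_smul, mul_comm]
      have : s = a0⁻¹ • (a0 • s - a • s0) + (a0⁻¹ * a) • s0 := by
        rw [smul_sub, smul_smul, smul_smul, inv_mul_cancel₀ ha0, one_smul]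
        abel
      rw [this]
      exact Submodule.add_mem _
        (Submodule.mem_sup_left (Submodule.smul_mem _ _ hmem))
        (Submodule.mem_sup_right (Submodule.smul_mem _ _ (Submodule.mem_span_singleton_self s0)))
    have hspanfin : FiniteDimensional ℂ (ℂ ∙ s0) := inferInstance
    have hsupfin : FiniteDimensional ℂ ((Hminus ⊔ (ℂ ∙ s0) : Submodule ℂ V)) :=
      Submodule.finiteDimensional_sup _ _
    have hup : finrank ℂ H ≤ finrank ℂ Hminus + 1 := by
      calc finrank ℂ H ≤ finrank ℂ ((Hminus ⊔ (ℂ ∙ s0) : Submodule ℂ V)) :=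
            Submodule.finrank_mono huple
        _ ≤ finrank ℂ Hminus + finrank ℂ (ℂ ∙ s0) := Submodule.finrank_add_le_finrank_add_finrank _ _
        _ ≤ finrank ℂ Hminus + 1 := by
            have hs0ne : s0 ≠ 0 := by
              intro h; exact hs0nm (h ▸ Hminus.zero_mem)
            rw [finrank_span_singleton hs0ne]
    omega
end

section
/- Let A ∈ GL_n(ℤ), λ an eigenvalue with |λ| = 1, and v₁, v₂ ∈ ℂ^n with A v₁ = λ v₁ and A v₂ = λ v₂ + v₁ (a Jordan chain of length 2). If y ∈ ℤ^n has finite orbit under the group generated by A^T, then v₁ · y = 0. -/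
/-!
Pairing `v₂` with the orbit point `(Aᵀ)ᵏ y` gives `v₂ · (Aᵀ)ᵏ y = (Aᵏ v₂) · y
= λᵏ⁻¹ (λ (v₂ · y) + k (v₁ · y))`. Since `|λ| = 1` its modulus is `|λ (v₂ · y) + k (v₁ · y)|`,
which grows linearly in `k` unless `v₁ · y = 0`, whereas a finite orbit keeps it bounded.
-/

open Matrix

namespace Module.End

variable {R M : Type*} [CommSemiring R] [AddCommMonoid M] [Module R M]

theorem smul_pow_apply_of_jordan_chain {f : Module.End R M} {l : R} {v₁ v₂ : M}
    (h₁ : f v₁ = l • v₁) (h₂ : f v₂ = l • v₂ + v₁) (k : ℕ) :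
    l • (f ^ k) v₂ = l ^ k • (l • v₂ + k • v₁) := by
  induction k with
  | zero => simp
  | succ k ih =>
    rw [pow_succ', mul_apply, ← map_smul, ih, map_smul, map_add, map_smul, map_nsmul, h₁, h₂]
    module

end Module.End

theorem RingHom.comp_transpose_pow_mulVec {R S n : Type*} [CommSemiring R] [CommSemiring S]
    [Fintype n] [DecidableEq n] (f : R →+* S) (B : Matrix n n R) (k : ℕ) (y : n → R) :
    f ∘ (Bᵀ ^ k *ᵥ y) = (B.map f ^ k)ᵀ *ᵥ (f ∘ y) := by
  ext i
  rw [Function.comp_apply, RingHom.map_mulVec, ← transpose_pow, transpose_map]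
  exact congrArg (fun N => (Nᵀ *ᵥ f ∘ y) i) (map_pow f.mapMatrix B k)

theorem eq_zero_of_forall_norm_add_nsmul_le {E : Type*} [NormedAddCommGroup E] [NormedSpace ℝ E]
    (a b : E) (C : ℝ) (h : ∀ k : ℕ, ‖a + k • b‖ ≤ C) : b = 0 := by
  have hlinear : ∀ k : ℕ, k * ‖b‖ ≤ C + ‖a‖ := fun k => by
    calc (k : ℝ) * ‖b‖ = ‖k • b‖ := by rw [RCLike.norm_nsmul ℝ, nsmul_eq_mul]
      _ = ‖(a + k • b) - a‖ := by rw [add_sub_cancel_left]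
      _ ≤ ‖a + k • b‖ + ‖a‖ := norm_sub_le _ _
      _ ≤ C + ‖a‖ := by linarith [h k]
  by_contra hb
  obtain ⟨k, hk⟩ := exists_nat_gt ((C + ‖a‖) / ‖b‖)
  rw [div_lt_iff₀ (norm_pos_iff.mpr hb)] at hk
  linarith [hlinear k]

/-- Let A ∈ GL_n(ℤ), λ an eigenvalue with |λ| = 1, and v₁, v₂ ∈ ℂ^n a Jordan chain of
length 2: A v₁ = λ v₁ and A v₂ = λ v₂ + v₁. If y ∈ ℤ^n has finite orbit under the group
generated by Aᵀ, then v₁ · y = 0. -/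
theorem stmt6 (n : ℕ) (A u : (Matrix (Fin n) (Fin n) ℤ)ˣ)
    (hu : (u : Matrix (Fin n) (Fin n) ℤ) = (A : Matrix (Fin n) (Fin n) ℤ).transpose)
    (l : ℂ) (hl : ‖l‖ = 1)
    (v₁ v₂ : Fin n → ℂ)
    (hv₁ : ((A : Matrix (Fin n) (Fin n) ℤ).map (Int.cast : ℤ → ℂ)).mulVec v₁ = l • v₁)
    (hv₂ : ((A : Matrix (Fin n) (Fin n) ℤ).map (Int.cast : ℤ → ℂ)).mulVec v₂ = l • v₂ + v₁)
    (y : Fin n → ℤ)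
    (hfin : (Set.range fun ξ : ℤ =>
        ((u ^ ξ : (Matrix (Fin n) (Fin n) ℤ)ˣ) : Matrix (Fin n) (Fin n) ℤ).mulVec y).Finite) :
    dotProduct v₁ (fun i => (y i : ℂ)) = 0 := by
  set M := (A : Matrix (Fin n) (Fin n) ℤ).map (Int.cast : ℤ → ℂ)
  set yc : Fin n → ℂ := fun i => (y i : ℂ)
  have horbit (k : ℕ) : ‖v₂ ⬝ᵥ (fun i => (((u ^ (k : ℤ)).val *ᵥ y) i : ℂ))‖
      = ‖l * (v₂ ⬝ᵥ yc) + k • (v₁ ⬝ᵥ yc)‖ := by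
    have hchain := Module.End.smul_pow_apply_of_jordan_chain (f := M.toLin') hv₁ hv₂ k
    rw [← toLin'_pow, toLin'_apply] at hchain
    have hcast : (fun i => (((u ^ (k : ℤ)).val *ᵥ y) i : ℂ)) = (M ^ k)ᵀ *ᵥ yc := by
      rw [zpow_natCast, Units.val_pow_eq_pow_val, hu]
      exact (Int.castRingHom ℂ).comp_transpose_pow_mulVec _ k y
    calc _ = ‖(l • (M ^ k *ᵥ v₂)) ⬝ᵥ yc‖ := by
          rw [hcast, smul_dotProduct, smul_eq_mul, norm_mul, hl, one_mul, dotProduct_mulVec,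
            vecMul_transpose]
      _ = ‖l ^ k * (l * (v₂ ⬝ᵥ yc) + k • (v₁ ⬝ᵥ yc))‖ := by
          rw [hchain, smul_dotProduct, add_dotProduct, smul_dotProduct, smul_dotProduct]
          rfl
      _ = _ := by rw [norm_mul, norm_pow, hl, one_pow, one_mul]
  obtain ⟨C, hC⟩ := (hfin.image fun w => ‖v₂ ⬝ᵥ (fun i => (w i : ℂ))‖).bddAbove
  exact eq_zero_of_forall_norm_add_nsmul_le _ _ C fun k =>
    (horbit k).symm.trans_le (hC ⟨_, ⟨k, rfl⟩, rfl⟩)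
end
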